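/- arXiv:0906.0176 — 6 statements merged into one kernel-verified Lean document; each statement's English description precedes it below -/
import Mathlib

section
/- Let K > 0, C, A, B, a₁ ≠ 0, a₂ be real constants with A and B not both zero, and set ε* := 2π e^C/(A² + B²). Let Φ : ℝ → ℝ be a twice continuously differentiable function satisfying Φ''(s) = ε* e^{-Φ(s)/K} for all s. Define a(t) := a₁ + a₂ t, ρ(t,x,y) := (1/a(t)²) e^{-Φ((Ax+By)/a(t))/K + C}, u(t,x,y) := (a'(t)/a(t))·(x,y), and the potential φ(t,x,y) := Φ((Ax+By)/a(t)). Then at every point (t,x,y) with a(t) ≠ 0, these functions satisfy the 2-dimensional isothermal Euler–Poisson equations: the continuity equation ∂ρ/∂t + ∇·(ρu) = 0, the momentum equations ρ(∂u/∂t + (u·∇)u) + K∇ρ = -ρ∇φ, and the Poisson equation Δφ = 2πρ (with the spatial gradient and Laplacian taken in (x,y)). -/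
/-!
The density `a⁻² g((Ax + By)/a)` transported by the radial field `(ȧ/a)(x, y)` is a self-similar
expansion and conserves mass for every profile `g` and every scaling `a`. When `a` is affine the
radial field has zero material acceleration, so the momentum equations reduce to the hydrostatic
balance `K ∇ρ = -ρ ∇φ`, which holds because `ρ` is a Boltzmann factor `e^{-φ/K}` of the potential.
Along the direction `(A, B)` the Laplacian of `Φ((Ax + By)/a)` is `(A² + B²) Φ''/a²`, and `ε*`
is chosen so that the ODE for `Φ` turns this into `2πρ`.
-/

open Real

theorem hasDerivAt_mul_add_div (A b c x : ℝ) :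
    HasDerivAt (fun x' => (A * x' + b) / c) (A / c) x := by
  simpa using (((hasDerivAt_id x).const_mul A).add_const b).div_const c

theorem hasDerivAt_add_mul_div (b B c y : ℝ) :
    HasDerivAt (fun y' => (b + B * y') / c) (B / c) y := by
  simpa using (((hasDerivAt_id y).const_mul B).const_add b).div_const c

theorem self_similar_continuity {a g : ℝ → ℝ} (hg : Differentiable ℝ g) {t : ℝ}
    (hat : DifferentiableAt ℝ a t) (ht : a t ≠ 0) (A B x y : ℝ) :
    deriv (fun t' => 1 / a t' ^ 2 * g ((A * x + B * y) / a t')) t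
      + deriv (fun x' => 1 / a t ^ 2 * g ((A * x' + B * y) / a t) * (deriv a t / a t * x')) x
      + deriv (fun y' => 1 / a t ^ 2 * g ((A * x + B * y') / a t) * (deriv a t / a t * y')) y
      = 0 := by
  set s := (A * x + B * y) / a t with hs
  set v := deriv a t / a t with hv
  have hdt : HasDerivAt (fun t' => 1 / a t' ^ 2 * g ((A * x + B * y) / a t'))
      (-2 * v / a t ^ 2 * g s - 1 / a t ^ 2 * deriv g s * ((A * x + B * y) * v / a t)) t := by
    refine (((hasDerivAt_const t (1 : ℝ)).div (hat.hasDerivAt.pow 2) (pow_ne_zero 2 ht)).mul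
      ((hg _).hasDerivAt.comp t
        ((hasDerivAt_const t (A * x + B * y)).div hat.hasDerivAt ht))).congr_deriv ?_
    simp only [Function.comp_apply, Pi.pow_apply, Pi.div_apply, ← hs, hv]
    field_simp
    ring
  have hdx : HasDerivAt (fun x' => 1 / a t ^ 2 * g ((A * x' + B * y) / a t) * (v * x'))
      (1 / a t ^ 2 * deriv g s * (A / a t) * (v * x) + 1 / a t ^ 2 * g s * v) x := by
    refine ((((hg _).hasDerivAt.comp x (hasDerivAt_mul_add_div A (B * y) (a t) x)).const_mul
      (1 / a t ^ 2)).mul ((hasDerivAt_id x).const_mul v)).congr_deriv ?_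
    simp only [Function.comp_apply, id_eq]
    ring
  have hdy : HasDerivAt (fun y' => 1 / a t ^ 2 * g ((A * x + B * y') / a t) * (v * y'))
      (1 / a t ^ 2 * deriv g s * (B / a t) * (v * y) + 1 / a t ^ 2 * g s * v) y := by
    refine ((((hg _).hasDerivAt.comp y (hasDerivAt_add_mul_div (A * x) B (a t) y)).const_mul
      (1 / a t ^ 2)).mul ((hasDerivAt_id y).const_mul v)).congr_deriv ?_
    simp only [Function.comp_apply, id_eq]
    ring
  rw [hdt.deriv, hdx.deriv, hdy.deriv, hs]
  field_simp
  ring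

theorem affine_expansion_acceleration_eq_zero {a : ℝ → ℝ} {a₂ : ℝ} (ha : ∀ t, HasDerivAt a a₂ t)
    {t : ℝ} (ht : a t ≠ 0) (x : ℝ) :
    deriv (fun t' => deriv a t' / a t' * x) t
      + deriv a t / a t * x * deriv (fun x' => deriv a t / a t * x') x = 0 := by
  have hda : deriv a = fun _ => a₂ := funext fun t => (ha t).deriv
  have hdt : HasDerivAt (fun t' => a₂ / a t' * x) (-a₂ * a₂ / a t ^ 2 * x) t := by
    simpa using ((hasDerivAt_const t a₂).fun_div (ha t) ht).mul_const x
  simp only [hda]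
  rw [hdt.deriv, deriv_const_mul_field', deriv_id'']
  field_simp
  ring

theorem isothermal_hydrostatic_balance {f : ℝ → ℝ} {x : ℝ} (hf : DifferentiableAt ℝ f x) {K : ℝ}
    (hK : K ≠ 0) (c C : ℝ) :
    K * deriv (fun x' => c * exp (-f x' / K + C)) x = -(c * exp (-f x / K + C) * deriv f x) := by
  have h : HasDerivAt (fun x' => c * exp (-f x' / K + C))
      (c * (exp (-f x / K + C) * (-deriv f x / K))) x :=
    (((hf.hasDerivAt.neg).div_const K).add_const C).exp.const_mul c
  rw [h.deriv]
  field_simp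

theorem deriv_deriv_comp_of_hasDerivAt_const {Φ ℓ : ℝ → ℝ} (hΦ : ContDiff ℝ 2 Φ) {p : ℝ}
    (hℓ : ∀ x, HasDerivAt ℓ p x) (x : ℝ) :
    deriv (deriv fun x' => Φ (ℓ x')) x = p ^ 2 * deriv (deriv Φ) (ℓ x) := by
  have hΦ' : Differentiable ℝ (deriv Φ) := by
    simpa [iteratedDeriv_one] using hΦ.differentiable_iteratedDeriv 1 (by norm_num)
  have hd : deriv (fun x' => Φ (ℓ x')) = fun x' => deriv Φ (ℓ x') * p := funext fun x' =>
    ((hΦ.differentiable (by norm_num) _).hasDerivAt.comp x' (hℓ x')).deriv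
  rw [hd]
  exact (((hΦ' _).hasDerivAt.comp x (hℓ x)).mul_const p).deriv.trans (by ring)

theorem euler_poisson_separable_solution_general
    (K C A B a₁ a₂ : ℝ) (hK : 0 < K)
    (hAB : ¬(A = 0 ∧ B = 0))
    (ε : ℝ) (hε : ε = 2 * Real.pi * Real.exp C / (A ^ 2 + B ^ 2))
    (Φ : ℝ → ℝ) (hΦ : ContDiff ℝ 2 Φ)
    (hODE : ∀ s : ℝ, deriv (deriv Φ) s = ε * Real.exp (-Φ s / K))
    (a : ℝ → ℝ) (ha : a = fun t => a₁ + a₂ * t)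
    (ρ : ℝ → ℝ → ℝ → ℝ)
    (hρ : ρ = fun t x y =>
      (1 / (a t) ^ 2) * Real.exp (-Φ ((A * x + B * y) / a t) / K + C))
    (u₁ u₂ : ℝ → ℝ → ℝ → ℝ)
    (hu₁ : u₁ = fun t x y => (deriv a t / a t) * x)
    (hu₂ : u₂ = fun t x y => (deriv a t / a t) * y)
    (φ : ℝ → ℝ → ℝ → ℝ)
    (hφ : φ = fun t x y => Φ ((A * x + B * y) / a t)) :
    ∀ t x y : ℝ, a t ≠ 0 →
      -- continuity equation: ρ_t + ∂_x(ρ u₁) + ∂_y(ρ u₂) = 0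
      (deriv (fun t' => ρ t' x y) t
        + deriv (fun x' => ρ t x' y * u₁ t x' y) x
        + deriv (fun y' => ρ t x y' * u₂ t x y') y = 0)
      ∧
      -- x-momentum equation
      (ρ t x y * (deriv (fun t' => u₁ t' x y) t
          + u₁ t x y * deriv (fun x' => u₁ t x' y) x
          + u₂ t x y * deriv (fun y' => u₁ t x y') y)
        + K * deriv (fun x' => ρ t x' y) x
        = -(ρ t x y * deriv (fun x' => φ t x' y) x))
      ∧
      -- y-momentum equation
      (ρ t x y * (deriv (fun t' => u₂ t' x y) t
          + u₁ t x y * deriv (fun x' => u₂ t x' y) x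
          + u₂ t x y * deriv (fun y' => u₂ t x y') y)
        + K * deriv (fun y' => ρ t x y') y
        = -(ρ t x y * deriv (fun y' => φ t x y') y))
      ∧
      -- Poisson equation: Δφ = 2πρ
      (deriv (fun x' => deriv (fun x'' => φ t x'' y) x') x
        + deriv (fun y' => deriv (fun y'' => φ t x y'') y') y
        = 2 * Real.pi * ρ t x y) := by
  have hat : ∀ t, HasDerivAt a a₂ t := fun t => by
    simpa [ha] using ((hasDerivAt_id t).const_mul a₂).const_add a₁
  have hΦd : Differentiable ℝ Φ := hΦ.differentiable (by norm_num)
  have hAB' : A ^ 2 + B ^ 2 ≠ 0 := by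
    rw [sq, sq, Ne, mul_self_add_mul_self_eq_zero]
    exact hAB
  subst hρ hu₁ hu₂ hφ
  intro t x y ht
  refine ⟨self_similar_continuity (g := fun s => exp (-Φ s / K + C)) (by fun_prop)
    (hat t).differentiableAt ht A B x y, ?_, ?_, ?_⟩
  · beta_reduce
    rw [deriv_const, mul_zero, add_zero, affine_expansion_acceleration_eq_zero hat ht, mul_zero,
      zero_add]
    exact isothermal_hydrostatic_balance
      ((hΦd _).comp x (hasDerivAt_mul_add_div A (B * y) (a t) x).differentiableAt) hK.ne' _ _
  · beta_reduce
    rw [deriv_const, mul_zero, add_zero, affine_expansion_acceleration_eq_zero hat ht, mul_zero,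
      zero_add]
    exact isothermal_hydrostatic_balance
      ((hΦd _).comp y (hasDerivAt_add_mul_div (A * x) B (a t) y).differentiableAt) hK.ne' _ _
  · beta_reduce
    rw [deriv_deriv_comp_of_hasDerivAt_const hΦ (hasDerivAt_mul_add_div A (B * y) (a t)),
      deriv_deriv_comp_of_hasDerivAt_const hΦ (hasDerivAt_add_mul_div (A * x) B (a t)),
      hODE, hε, exp_add]
    field_simp

/-- The separable ansatz `ρ, u, φ` built from a solution `Φ` of
`Φ'' = ε* e^{-Φ/K}` and the linear scaling `a(t) = a₁ + a₂ t` satisfies the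
2-dimensional isothermal Euler–Poisson equations (continuity, both momentum
components, and the Poisson equation) at every point where `a(t) ≠ 0`. -/
theorem euler_poisson_separable_solution
    (K C A B a₁ a₂ : ℝ) (hK : 0 < K) (ha₁ : a₁ ≠ 0)
    (hAB : ¬(A = 0 ∧ B = 0))
    (ε : ℝ) (hε : ε = 2 * Real.pi * Real.exp C / (A ^ 2 + B ^ 2))
    (Φ : ℝ → ℝ) (hΦ : ContDiff ℝ 2 Φ)
    (hODE : ∀ s : ℝ, deriv (deriv Φ) s = ε * Real.exp (-Φ s / K))
    (a : ℝ → ℝ) (ha : a = fun t => a₁ + a₂ * t)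
    (ρ : ℝ → ℝ → ℝ → ℝ)
    (hρ : ρ = fun t x y =>
      (1 / (a t) ^ 2) * Real.exp (-Φ ((A * x + B * y) / a t) / K + C))
    (u₁ u₂ : ℝ → ℝ → ℝ → ℝ)
    (hu₁ : u₁ = fun t x y => (deriv a t / a t) * x)
    (hu₂ : u₂ = fun t x y => (deriv a t / a t) * y)
    (φ : ℝ → ℝ → ℝ → ℝ)
    (hφ : φ = fun t x y => Φ ((A * x + B * y) / a t)) :
    ∀ t x y : ℝ, a t ≠ 0 →
      -- continuity equation: ρ_t + ∂_x(ρ u₁) + ∂_y(ρ u₂) = 0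
      (deriv (fun t' => ρ t' x y) t
        + deriv (fun x' => ρ t x' y * u₁ t x' y) x
        + deriv (fun y' => ρ t x y' * u₂ t x y') y = 0)
      ∧
      -- x-momentum equation
      (ρ t x y * (deriv (fun t' => u₁ t' x y) t
          + u₁ t x y * deriv (fun x' => u₁ t x' y) x
          + u₂ t x y * deriv (fun y' => u₁ t x y') y)
        + K * deriv (fun x' => ρ t x' y) x
        = -(ρ t x y * deriv (fun x' => φ t x' y) x))
      ∧
      -- y-momentum equation
      (ρ t x y * (deriv (fun t' => u₂ t' x y) t
          + u₁ t x y * deriv (fun x' => u₂ t x' y) x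
          + u₂ t x y * deriv (fun y' => u₂ t x y') y)
        + K * deriv (fun y' => ρ t x y') y
        = -(ρ t x y * deriv (fun y' => φ t x y') y))
      ∧
      -- Poisson equation: Δφ = 2πρ
      (deriv (fun x' => deriv (fun x'' => φ t x'' y) x') x
        + deriv (fun y' => deriv (fun y'' => φ t x y'') y') y
        = 2 * Real.pi * ρ t x y) :=
  euler_poisson_separable_solution_general K C A B a₁ a₂ hK hAB ε hε Φ hΦ hODE a ha ρ hρ u₁ u₂ hu₁
    hu₂ φ hφ
end

section
/- Let K > 0, ε* > 0, α, β be real constants. Then there exists a twice continuously differentiable function Φ : ℝ → ℝ defined on all of (-∞, +∞) satisfying Φ''(s) = ε* e^{-Φ(s)/K} for all s ∈ ℝ with Φ(0) = α and Φ'(0) = β. -/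
/-!
The equation is autonomous and has the explicit solutions `a + 2K log cosh (l s - c)`, for every
`a, l, c` with `2K l² = ε e^{-a/K}`. These three parameters with one constraint can be fitted to any
initial data: `Φ(0) = α` fixes `a` in terms of `c`, the constraint then reads `l = m cosh c` with
`m = √(ε e^{-α/K} / 2K)`, and `Φ'(0) = -2K m sinh c` fixes `c = arsinh (-β / 2Km)`.
-/

open Real

namespace Real

theorem hasDerivAt_tanh (x : ℝ) : HasDerivAt tanh (1 / cosh x ^ 2) x := by
  rw [show tanh = sinh / cosh from funext tanh_eq_sinh_div_cosh]
  refine ((hasDerivAt_sinh x).div (hasDerivAt_cosh x) (cosh_pos x).ne').congr_deriv ?_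
  rw [← cosh_sq_sub_sinh_sq x]
  ring

theorem hasDerivAt_log_cosh (x : ℝ) : HasDerivAt (fun y => log (cosh y)) (tanh x) x := by
  convert (hasDerivAt_cosh x).log (cosh_pos x).ne' using 1
  rw [tanh_eq_sinh_div_cosh]

end Real

noncomputable def logCoshProfile (a A l c s : ℝ) : ℝ := a + A * log (cosh (l * s - c))

section LogCoshProfile

variable (a A l c : ℝ)

theorem hasDerivAt_logCoshProfile (s : ℝ) :
    HasDerivAt (logCoshProfile a A l c) (A * l * tanh (l * s - c)) s := by
  have hlin : HasDerivAt (fun t => l * t - c) l s := by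
    simpa using ((hasDerivAt_id s).const_mul l).sub_const c
  exact (((hasDerivAt_log_cosh _).comp s hlin).const_mul A |>.const_add a).congr_deriv (by ring)

theorem deriv_logCoshProfile :
    deriv (logCoshProfile a A l c) = fun s => A * l * tanh (l * s - c) :=
  funext fun s => (hasDerivAt_logCoshProfile a A l c s).deriv

theorem deriv_deriv_logCoshProfile (s : ℝ) :
    deriv (deriv (logCoshProfile a A l c)) s = A * l ^ 2 / cosh (l * s - c) ^ 2 := by
  have hlin : HasDerivAt (fun t => l * t - c) l s := by
    simpa using ((hasDerivAt_id s).const_mul l).sub_const c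
  rw [deriv_logCoshProfile]
  exact ((((hasDerivAt_tanh _).comp s hlin).const_mul (A * l)).congr_deriv (by ring)).deriv

theorem contDiff_logCoshProfile {n : WithTop ℕ∞} : ContDiff ℝ n (logCoshProfile a A l c) :=
  contDiff_const.add <| contDiff_const.mul <|
    (contDiff_cosh.comp (contDiff_const.mul contDiff_id |>.sub contDiff_const)).log
      fun _ => (cosh_pos _).ne'

theorem exp_neg_logCoshProfile_div {K : ℝ} (hK : K ≠ 0) (s : ℝ) :
    exp (-logCoshProfile a (2 * K) l c s / K) = exp (-a / K) / cosh (l * s - c) ^ 2 := by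
  have h : -logCoshProfile a (2 * K) l c s / K = -a / K - log (cosh (l * s - c) ^ 2) := by
    rw [log_pow, logCoshProfile]; field_simp; ring
  rw [h, exp_sub, exp_log (by positivity)]

theorem logCoshProfile_solves_ode {K ε : ℝ} (hK : K ≠ 0) (h : 2 * K * l ^ 2 = ε * exp (-a / K))
    (s : ℝ) :
    deriv (deriv (logCoshProfile a (2 * K) l c)) s
      = ε * exp (-logCoshProfile a (2 * K) l c s / K) := by
  rw [deriv_deriv_logCoshProfile, exp_neg_logCoshProfile_div a l c hK, h, mul_div_assoc]

end LogCoshProfile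

/-- Global existence for the ODE `Φ'' = ε* e^{-Φ/K}` with initial
data `Φ(0) = α`, `Φ'(0) = β`: there is a twice continuously differentiable
solution defined on all of `(-∞, +∞)`. -/
theorem ode_global_existence
    (K ε α β : ℝ) (hK : 0 < K) (hε : 0 < ε) :
    ∃ Φ : ℝ → ℝ, ContDiff ℝ 2 Φ ∧
      (∀ s : ℝ, deriv (deriv Φ) s = ε * Real.exp (-Φ s / K)) ∧
      Φ 0 = α ∧ deriv Φ 0 = β := by
  set m := √(ε * exp (-α / K) / (2 * K))
  have hm : 0 < m := sqrt_pos.mpr (by positivity)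
  set c := arsinh (-β / (2 * K * m))
  have hc : sinh c = -β / (2 * K * m) := sinh_arsinh _
  set l := m * cosh c
  set a := α - 2 * K * log (cosh c)
  have hexp : exp (-a / K) = exp (-α / K) * cosh c ^ 2 := by
    rw [← exp_log (pow_pos (cosh_pos c) 2), ← exp_add, log_pow]
    congr 1; field_simp; ring
  have hl : 2 * K * l ^ 2 = ε * exp (-a / K) := by
    rw [hexp, mul_pow, sq_sqrt (by positivity)]
    field_simp
  refine ⟨logCoshProfile a (2 * K) l c, contDiff_logCoshProfile a _ l c,
    logCoshProfile_solves_ode a l c hK.ne' hl, ?_, ?_⟩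
  · simp [logCoshProfile, a]
  · rw [deriv_logCoshProfile]
    simp only [mul_zero, zero_sub, tanh_eq_sinh_div_cosh, sinh_neg, cosh_neg, hc, l]
    field_simp
end

section
/- Let K > 0, ε* > 0, α, β be real constants, and let Φ : ℝ → ℝ be a twice continuously differentiable function satisfying Φ''(s) = ε* e^{-Φ(s)/K} for all s ∈ ℝ with Φ(0) = α and Φ'(0) = β. Then Φ(s) → +∞ as s → +∞ and Φ(s) → +∞ as s → -∞. -/
/-!
Only two features of the right-hand side `ε e^{-Φ/K}` matter: it is positive and antitone in `Φ`.
Since `Φ'' > 0`, `Φ'` is increasing, and `Φ'` cannot stay `≤ 0`: then `Φ ≤ Φ 0` on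
`[0, ∞)`, so `Φ'' ≥ ε e^{-Φ 0 / K} > 0` there and `Φ'` would grow without bound. Once
`Φ' (s₀) > 0`, `Φ` grows at least linearly beyond `s₀`. The behaviour at `-∞` follows by applying
this to `s ↦ Φ (-s)`, which solves the same equation.
-/

open Filter Set

theorem tendsto_atTop_of_pos_le_deriv {f : ℝ → ℝ} (hf : Differentiable ℝ f) {a m : ℝ}
    (hm : 0 < m) (h : ∀ x, a ≤ x → m ≤ deriv f x) : Tendsto f atTop atTop := by
  have linear_lower_bound : ∀ x, a ≤ x → f a + m * (x - a) ≤ f x := by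
    intro x hx
    have := (convex_Ici a).mul_sub_le_image_sub_of_le_deriv hf.continuous.continuousOn
      hf.differentiableOn (fun x hx ↦ h x (interior_subset hx : x ∈ Ici a))
      a self_mem_Ici x hx hx
    linarith
  refine tendsto_atTop_mono' atTop (f₁ := fun x ↦ f a + m * (x - a)) ?_ ?_
  · filter_upwards [eventually_ge_atTop a] with x hx using linear_lower_bound x hx
  · simp_rw [sub_eq_add_neg]
    exact tendsto_atTop_add_const_left _ _
      ((tendsto_atTop_add_const_right _ _ tendsto_id).const_mul_atTop hm)

theorem deriv_deriv_comp_neg (f : ℝ → ℝ) (x : ℝ) :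
    deriv (deriv fun y ↦ f (-y)) x = deriv (deriv f) (-x) := by
  simp [funext (deriv_comp_neg f), deriv_comp_neg]

theorem exists_deriv_pos_of_antitone_le_deriv_deriv {f φ : ℝ → ℝ} (hf : Differentiable ℝ f)
    (hf' : Differentiable ℝ (deriv f)) (hφ : Antitone φ) (hφ_pos : ∀ x, 0 < φ x)
    (hf'' : ∀ s, φ (f s) ≤ deriv (deriv f) s) : ∃ s, 0 < deriv f s := by
  by_contra! h
  have hanti : Antitone f := antitone_of_deriv_nonpos hf h
  have : Tendsto (deriv f) atTop atTop :=
    tendsto_atTop_of_pos_le_deriv hf' (hφ_pos (f 0)) fun s hs ↦ (hφ (hanti hs)).trans (hf'' s)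
  obtain ⟨s, hs⟩ := (this.eventually_gt_atTop 0).exists
  exact (h s).not_gt hs

theorem tendsto_atTop_of_antitone_le_deriv_deriv {f φ : ℝ → ℝ} (hf : Differentiable ℝ f)
    (hf' : Differentiable ℝ (deriv f)) (hφ : Antitone φ) (hφ_pos : ∀ x, 0 < φ x)
    (hf'' : ∀ s, φ (f s) ≤ deriv (deriv f) s) : Tendsto f atTop atTop := by
  obtain ⟨s₀, hs₀⟩ := exists_deriv_pos_of_antitone_le_deriv_deriv hf hf' hφ hφ_pos hf''
  have hmono : Monotone (deriv f) :=
    monotone_of_deriv_nonneg hf' fun s ↦ (hφ_pos _).le.trans (hf'' s)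
  exact tendsto_atTop_of_pos_le_deriv hf hs₀ fun s hs ↦ hmono hs

theorem tendsto_atBot_of_antitone_le_deriv_deriv {f φ : ℝ → ℝ} (hf : Differentiable ℝ f)
    (hf' : Differentiable ℝ (deriv f)) (hφ : Antitone φ) (hφ_pos : ∀ x, 0 < φ x)
    (hf'' : ∀ s, φ (f s) ≤ deriv (deriv f) s) : Tendsto f atBot atTop := by
  have hderiv : deriv (fun s ↦ f (-s)) = fun s ↦ -deriv f (-s) := funext (deriv_comp_neg f)
  have := tendsto_atTop_of_antitone_le_deriv_deriv (f := fun s ↦ f (-s))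
    (hf.comp differentiable_neg) (hderiv ▸ (hf'.comp differentiable_neg).neg) hφ hφ_pos
    fun s ↦ by simpa [deriv_deriv_comp_neg] using hf'' (-s)
  simpa [Function.comp_def] using this.comp tendsto_neg_atBot_atTop

theorem ode_solution_tendsto_infty_general
    (K ε : ℝ) (hK : 0 < K) (hε : 0 < ε)
    (Φ : ℝ → ℝ) (hΦ : ContDiff ℝ 2 Φ)
    (hODE : ∀ s : ℝ, deriv (deriv Φ) s = ε * Real.exp (-Φ s / K)) :
    Filter.Tendsto Φ Filter.atTop Filter.atTop ∧
      Filter.Tendsto Φ Filter.atBot Filter.atTop := by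
  have hφ : Antitone fun x ↦ ε * Real.exp (-x / K) := fun x y hxy ↦ by
    dsimp only
    gcongr
  have hφ_pos : ∀ x, 0 < ε * Real.exp (-x / K) := fun x ↦ by positivity
  have hf := hΦ.differentiable (by norm_num)
  have hf' := hΦ.differentiable_deriv_two
  have hf'' := fun s ↦ (hODE s).ge
  exact ⟨tendsto_atTop_of_antitone_le_deriv_deriv hf hf' hφ hφ_pos hf'',
    tendsto_atBot_of_antitone_le_deriv_deriv hf hf' hφ hφ_pos hf''⟩

/-- Any global C² solution of `Φ'' = ε* e^{-Φ/K}` with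
`Φ(0) = α`, `Φ'(0) = β` tends to `+∞` as `s → +∞` and as `s → -∞`. -/
theorem ode_solution_tendsto_infty
    (K ε α β : ℝ) (hK : 0 < K) (hε : 0 < ε)
    (Φ : ℝ → ℝ) (hΦ : ContDiff ℝ 2 Φ)
    (hODE : ∀ s : ℝ, deriv (deriv Φ) s = ε * Real.exp (-Φ s / K))
    (h0 : Φ 0 = α) (h0' : deriv Φ 0 = β) :
    Filter.Tendsto Φ Filter.atTop Filter.atTop ∧
      Filter.Tendsto Φ Filter.atBot Filter.atTop :=
  ode_solution_tendsto_infty_general K ε hK hε Φ hΦ hODE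
end

section
/- Let K > 0, C, A, B be real constants with A and B not both zero, set ε* := 2π e^C/(A² + B²), and let Φ : ℝ → ℝ be a twice continuously differentiable function satisfying Φ''(s) = ε* e^{-Φ(s)/K} for all s. Let a : ℝ → ℝ be differentiable. Define ρ(t,x,y) := (1/a(t)²) e^{-Φ((Ax+By)/a(t))/K + C} and the potential φ(t,x,y) := Φ((Ax+By)/a(t)). Then at every point (t,x,y) with a(t) ≠ 0, the Poisson equation Δφ(t,x,y) = 2π ρ(t,x,y) holds, where Δ is the Laplacian in the spatial variables (x,y). -/
/-!
Since `φ` depends on the space variables only through the affine form `s = (A x + B y) / a(t)`,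
its spatial Laplacian is `(A² + B²) / a(t)² · Φ''(s)`, and the ODE for `Φ` with the chosen value
of `ε*` turns this into `2π e^C e^{-Φ(s)/K} / a(t)² = 2πρ`.
-/

section AffineComposition

variable {𝕜 E : Type*} [NontriviallyNormedField 𝕜] [NormedAddCommGroup E] [NormedSpace 𝕜 E]

/-- No differentiability of `f` is needed: for `c ≠ 0` the affine map is a diffeomorphism, and
for `c = 0` both sides vanish. -/
theorem deriv_comp_mul_add (f : 𝕜 → E) (c d x : 𝕜) :
    deriv (fun z => f (c * z + d)) x = c • deriv f (c * x + d) := by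
  rw [deriv_comp_mul_left c (fun y => f (y + d)) x, deriv_comp_add_const]

theorem deriv_deriv_comp_mul_add (f : 𝕜 → E) (c d x : 𝕜) :
    deriv (fun y => deriv (fun z => f (c * z + d)) y) x = c ^ 2 • deriv (deriv f) (c * x + d) := by
  simp only [deriv_comp_mul_add f c d, deriv_comp_mul_add (fun y => c • deriv f y) c d,
    deriv_fun_const_smul_field, smul_smul, sq]

end AffineComposition

theorem poisson_equation_separable_general
    (K C A B : ℝ) (hAB : ¬(A = 0 ∧ B = 0))
    (ε : ℝ) (hε : ε = 2 * Real.pi * Real.exp C / (A ^ 2 + B ^ 2))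
    (Φ : ℝ → ℝ)
    (hODE : ∀ s : ℝ, deriv (deriv Φ) s = ε * Real.exp (-Φ s / K))
    (a : ℝ → ℝ)
    (ρ : ℝ → ℝ → ℝ → ℝ)
    (hρ : ρ = fun t x y =>
      (1 / (a t) ^ 2) * Real.exp (-Φ ((A * x + B * y) / a t) / K + C))
    (φ : ℝ → ℝ → ℝ → ℝ)
    (hφ : φ = fun t x y => Φ ((A * x + B * y) / a t)) :
    ∀ t x y : ℝ, a t ≠ 0 →
      deriv (fun x' => deriv (fun x'' => φ t x'' y) x') x
        + deriv (fun y' => deriv (fun y'' => φ t x y'') y') y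
        = 2 * Real.pi * ρ t x y := by
  subst hρ hφ
  intro t x y _
  have hsum_sq : A ^ 2 + B ^ 2 ≠ 0 := fun h =>
    hAB (mul_self_add_mul_self_eq_zero.mp (by rwa [sq, sq] at h))
  have in_x : ∀ z, (A * z + B * y) / a t = A / a t * z + B * y / a t := fun z => by ring
  have in_y : ∀ z, (A * x + B * z) / a t = B / a t * z + A * x / a t := fun z => by ring
  simp only [in_x, in_y, deriv_deriv_comp_mul_add, smul_eq_mul]
  rw [show B / a t * y + A * x / a t = A / a t * x + B * y / a t by ring, hODE, hε, Real.exp_add]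
  field_simp

/-- With `ε* = 2π e^C/(A² + B²)` and `Φ` a C² solution of
`Φ'' = ε* e^{-Φ/K}`, the potential `φ(t,x,y) = Φ((Ax+By)/a(t))` and the
density `ρ(t,x,y) = (1/a(t)²) e^{-Φ((Ax+By)/a(t))/K + C}` satisfy the Poisson
equation `Δφ = 2πρ` (spatial Laplacian) wherever `a(t) ≠ 0`. -/
theorem poisson_equation_separable
    (K C A B : ℝ) (hK : 0 < K) (hAB : ¬(A = 0 ∧ B = 0))
    (ε : ℝ) (hε : ε = 2 * Real.pi * Real.exp C / (A ^ 2 + B ^ 2))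
    (Φ : ℝ → ℝ) (hΦ : ContDiff ℝ 2 Φ)
    (hODE : ∀ s : ℝ, deriv (deriv Φ) s = ε * Real.exp (-Φ s / K))
    (a : ℝ → ℝ) (ha : Differentiable ℝ a)
    (ρ : ℝ → ℝ → ℝ → ℝ)
    (hρ : ρ = fun t x y =>
      (1 / (a t) ^ 2) * Real.exp (-Φ ((A * x + B * y) / a t) / K + C))
    (φ : ℝ → ℝ → ℝ → ℝ)
    (hφ : φ = fun t x y => Φ ((A * x + B * y) / a t)) :
    ∀ t x y : ℝ, a t ≠ 0 →
      deriv (fun x' => deriv (fun x'' => φ t x'' y) x') x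
        + deriv (fun y' => deriv (fun y'' => φ t x y'') y') y
        = 2 * Real.pi * ρ t x y :=
  poisson_equation_separable_general K C A B hAB ε hε Φ hODE a ρ hρ φ hφ
end

section
/- Let K > 0, C, A, B, a₁, a₂ be real constants with A and B not both zero, set ε* := 2π e^C/(A² + B²), and let Φ : ℝ → ℝ be a twice continuously differentiable function satisfying Φ''(s) = ε* e^{-Φ(s)/K} for all s. Define a(t) := a₁ + a₂ t, ρ(t,x,y) := (1/a(t)²) e^{-Φ((Ax+By)/a(t))/K + C}, u(t,x,y) := (a'(t)/a(t))·(x,y), and φ(t,x,y) := Φ((Ax+By)/a(t)). Then at every point (t,x,y) with a(t) ≠ 0, the x-component of the isothermal momentum equation holds: ρ(∂u₁/∂t + u₁ ∂u₁/∂x + u₂ ∂u₁/∂y) + K ∂ρ/∂x + ρ ∂φ/∂x = 0. -/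
/-!
The two halves of the equation vanish separately. The velocity is the linear flow
`u = H(t) x` with `H = a'/a`; since `a` is affine, `H' = -H²`, so the acceleration
`∂ₜu₁ + u₁ ∂ₓu₁ = (H' + H²) x` is zero. The density is the Boltzmann factor
`ρ = a⁻² exp (-φ/K + C)` of the potential, so `K ∂ₓρ = -ρ ∂ₓφ`.
-/

open Real

theorem hydrostatic_balance_of_boltzmann {K : ℝ} (hK : K ≠ 0) (c C : ℝ) {g : ℝ → ℝ} {x : ℝ}
    (hg : DifferentiableAt ℝ g x) :
    K * deriv (fun x => c * exp (-g x / K + C)) x + c * exp (-g x / K + C) * deriv g x = 0 := by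
  have hρ : HasDerivAt (fun x => c * exp (-g x / K + C))
      (c * (exp (-g x / K + C) * (-deriv g x / K))) x :=
    (((hg.hasDerivAt.neg).div_const K).add_const C).exp.const_mul c
  rw [hρ.deriv]
  field_simp
  ring

theorem hasDerivAt_logDeriv_of_hasDerivAt_const {a : ℝ → ℝ} {c t : ℝ}
    (ha : ∀ s, HasDerivAt a c s) (ht : a t ≠ 0) :
    HasDerivAt (logDeriv a) (-logDeriv a t ^ 2) t := by
  have hH : logDeriv a = fun s => c / a s := funext fun s => by rw [logDeriv_apply, (ha s).deriv]
  rw [hH]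
  refine ((hasDerivAt_const t c).div (ha t) ht).congr_deriv ?_
  field_simp
  ring

theorem momentum_equation_x_component_general
    (K C A B a₁ a₂ : ℝ) (hK : 0 < K)
    (Φ : ℝ → ℝ) (hΦ : ContDiff ℝ 2 Φ)
    (a : ℝ → ℝ) (ha : a = fun t => a₁ + a₂ * t)
    (ρ : ℝ → ℝ → ℝ → ℝ)
    (hρ : ρ = fun t x y =>
      (1 / (a t) ^ 2) * Real.exp (-Φ ((A * x + B * y) / a t) / K + C))
    (u₁ u₂ : ℝ → ℝ → ℝ → ℝ)
    (hu₁ : u₁ = fun t x y => (deriv a t / a t) * x)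
    (φ : ℝ → ℝ → ℝ → ℝ)
    (hφ : φ = fun t x y => Φ ((A * x + B * y) / a t)) :
    ∀ t x y : ℝ, a t ≠ 0 →
      ρ t x y * (deriv (fun t' => u₁ t' x y) t
          + u₁ t x y * deriv (fun x' => u₁ t x' y) x
          + u₂ t x y * deriv (fun y' => u₁ t x y') y)
        + K * deriv (fun x' => ρ t x' y) x
        + ρ t x y * deriv (fun x' => φ t x' y) x = 0 := by
  intro t x y hat
  have ha' : ∀ s, HasDerivAt a a₂ s := fun s => by
    simpa [ha] using ((hasDerivAt_id s).const_mul a₂).const_add a₁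
  have hu₁' : u₁ = fun t x _ => logDeriv a t * x := hu₁
  simp only [hρ, hu₁', hφ]
  have h_t : deriv (fun t' => logDeriv a t' * x) t = -logDeriv a t ^ 2 * x :=
    ((hasDerivAt_logDeriv_of_hasDerivAt_const ha' hat).mul_const x).deriv
  have h_x : deriv (fun x' => logDeriv a t * x') x = logDeriv a t :=
    ((hasDerivAt_id x).const_mul _).deriv.trans (mul_one _)
  have h_y : deriv (fun _ : ℝ => logDeriv a t * x) y = 0 := deriv_const y _
  have hφx : DifferentiableAt ℝ (fun x' => Φ ((A * x' + B * y) / a t)) x :=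
    (hΦ.differentiable two_ne_zero).differentiableAt.comp x (by fun_prop)
  rw [h_t, h_x, h_y]
  linear_combination hydrostatic_balance_of_boltzmann hK.ne' (1 / a t ^ 2) C hφx

/-- The separable ansatz with `a(t) = a₁ + a₂ t` satisfies the
x-component of the isothermal momentum equation
`ρ(∂u₁/∂t + u₁ ∂u₁/∂x + u₂ ∂u₁/∂y) + K ∂ρ/∂x + ρ ∂φ/∂x = 0`
wherever `a(t) ≠ 0`. -/
theorem momentum_equation_x_component
    (K C A B a₁ a₂ : ℝ) (hK : 0 < K) (hAB : ¬(A = 0 ∧ B = 0))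
    (ε : ℝ) (hε : ε = 2 * Real.pi * Real.exp C / (A ^ 2 + B ^ 2))
    (Φ : ℝ → ℝ) (hΦ : ContDiff ℝ 2 Φ)
    (hODE : ∀ s : ℝ, deriv (deriv Φ) s = ε * Real.exp (-Φ s / K))
    (a : ℝ → ℝ) (ha : a = fun t => a₁ + a₂ * t)
    (ρ : ℝ → ℝ → ℝ → ℝ)
    (hρ : ρ = fun t x y =>
      (1 / (a t) ^ 2) * Real.exp (-Φ ((A * x + B * y) / a t) / K + C))
    (u₁ u₂ : ℝ → ℝ → ℝ → ℝ)
    (hu₁ : u₁ = fun t x y => (deriv a t / a t) * x)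
    (hu₂ : u₂ = fun t x y => (deriv a t / a t) * y)
    (φ : ℝ → ℝ → ℝ → ℝ)
    (hφ : φ = fun t x y => Φ ((A * x + B * y) / a t)) :
    ∀ t x y : ℝ, a t ≠ 0 →
      ρ t x y * (deriv (fun t' => u₁ t' x y) t
          + u₁ t x y * deriv (fun x' => u₁ t x' y) x
          + u₂ t x y * deriv (fun y' => u₁ t x y') y)
        + K * deriv (fun x' => ρ t x' y) x
        + ρ t x y * deriv (fun x' => φ t x' y) x = 0 :=
  momentum_equation_x_component_general K C A B a₁ a₂ hK Φ hΦ a ha ρ hρ u₁ u₂ hu₁ φ hφ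
end

section
/- Let K > 0, C, A, B, a₁, a₂ be real constants with A and B not both zero, set ε* := 2π e^C/(A² + B²), and let Φ : ℝ → ℝ be a twice continuously differentiable function satisfying Φ''(s) = ε* e^{-Φ(s)/K} for all s. Define a(t) := a₁ + a₂ t, ρ(t,x,y) := (1/a(t)²) e^{-Φ((Ax+By)/a(t))/K + C}, u(t,x,y) := (a'(t)/a(t))·(x,y), and φ(t,x,y) := Φ((Ax+By)/a(t)). Then at every point (t,x,y) with a(t) ≠ 0, the y-component of the isothermal momentum equation holds: ρ(∂u₂/∂t + u₁ ∂u₂/∂x + u₂ ∂u₂/∂y) + K ∂ρ/∂y + ρ ∂φ/∂y = 0. -/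
/-- The separable ansatz with `a(t) = a₁ + a₂ t` satisfies the
y-component of the isothermal momentum equation
`ρ(∂u₂/∂t + u₁ ∂u₂/∂x + u₂ ∂u₂/∂y) + K ∂ρ/∂y + ρ ∂φ/∂y = 0`
wherever `a(t) ≠ 0`. -/
theorem momentum_equation_y_component
    (K C A B a₁ a₂ : ℝ) (hK : 0 < K) (hAB : ¬(A = 0 ∧ B = 0))
    (ε : ℝ) (hε : ε = 2 * Real.pi * Real.exp C / (A ^ 2 + B ^ 2))
    (Φ : ℝ → ℝ) (hΦ : ContDiff ℝ 2 Φ)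
    (hODE : ∀ s : ℝ, deriv (deriv Φ) s = ε * Real.exp (-Φ s / K))
    (a : ℝ → ℝ) (ha : a = fun t => a₁ + a₂ * t)
    (ρ : ℝ → ℝ → ℝ → ℝ)
    (hρ : ρ = fun t x y =>
      (1 / (a t) ^ 2) * Real.exp (-Φ ((A * x + B * y) / a t) / K + C))
    (u₁ u₂ : ℝ → ℝ → ℝ → ℝ)
    (hu₁ : u₁ = fun t x y => (deriv a t / a t) * x)
    (hu₂ : u₂ = fun t x y => (deriv a t / a t) * y)
    (φ : ℝ → ℝ → ℝ → ℝ)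
    (hφ : φ = fun t x y => Φ ((A * x + B * y) / a t)) :
    ∀ t x y : ℝ, a t ≠ 0 →
      ρ t x y * (deriv (fun t' => u₂ t' x y) t
          + u₁ t x y * deriv (fun x' => u₂ t x' y) x
          + u₂ t x y * deriv (fun y' => u₂ t x y') y)
        + K * deriv (fun y' => ρ t x y') y
        + ρ t x y * deriv (fun y' => φ t x y') y = 0 := by
  subst ha hρ hu₁ hu₂ hφ
  intro t x y hat
  simp only at hat
  have hΦ' : Differentiable ℝ Φ := hΦ.differentiable (by norm_num)
  have hda : deriv (fun t => a₁ + a₂ * t) = fun _ => a₂ := by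
    funext t
    simpa using (((hasDerivAt_id t).const_mul a₂).const_add a₁).deriv
  simp only [hda]
  set at' := a₁ + a₂ * t with hat'
  set s := (A * x + B * y) / at' with hs
  -- time derivative of u₂
  have hA1 : HasDerivAt (fun t' => a₂ / (a₁ + a₂ * t') * y)
      (-(a₂ * (a₂ / at' ^ 2)) * y) t := by
    have h0 : HasDerivAt (fun t' : ℝ => a₁ + a₂ * t') a₂ t := by
      simpa using ((hasDerivAt_id t).const_mul a₂).const_add a₁
    have := ((h0.inv hat).const_mul a₂).mul_const y
    simpa [div_eq_mul_inv, mul_comm, mul_assoc, mul_left_comm] using this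
  -- x derivative of u₂ is zero (constant)
  have hA2 : deriv (fun _ : ℝ => a₂ / at' * y) x = 0 := deriv_const _ _
  -- y derivative of u₂
  have hA3 : HasDerivAt (fun y' => a₂ / at' * y') (a₂ / at') y := by
    simpa using (hasDerivAt_id y).const_mul (a₂ / at')
  -- inner function derivative in y
  have hS : HasDerivAt (fun y' => (A * x + B * y') / at') (B / at') y := by
    have := (((hasDerivAt_id y).const_mul B).const_add (A * x)).div_const at'
    simpa using this
  -- φ derivative in y
  have hPhi : HasDerivAt (fun y' => Φ ((A * x + B * y') / at'))
      (deriv Φ s * (B / at')) y :=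
    (hΦ'.differentiableAt.hasDerivAt).comp y hS
  -- ρ derivative in y
  have hRho : HasDerivAt
      (fun y' => 1 / at' ^ 2 * Real.exp (-Φ ((A * x + B * y') / at') / K + C))
      (1 / at' ^ 2 * (Real.exp (-Φ s / K + C) * (-(deriv Φ s * (B / at')) / K))) y := by
    have h1 : HasDerivAt (fun y' => -Φ ((A * x + B * y') / at') / K + C)
        (-(deriv Φ s * (B / at')) / K) y := (hPhi.neg.div_const K).add_const C
    exact (h1.exp.const_mul _)
  rw [hA1.deriv, hA2, hA3.deriv, hPhi.deriv, hRho.deriv]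
  field_simp
  ring
end
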